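/- Let λ ∈ (0, 2^{−1/2}) and let f ∈ ℬ satisfy f(λ) = f′(λ) = 0, with infinitely many of the coefficients of f different from −1. Then (λ, λ) lies in the closure of 𝒩₊: for every ε > 0 there exist g ∈ ℬ and real numbers γ′, λ′ with λ − ε < γ′ < λ′ < λ + ε, 0 < γ′ < λ′ < 1, and g(γ′) = g(λ′) = 0. -/

import Mathlib

/-!
Write `f(x) = ∑ aₙ xⁿ`. At a double zero `λ` with `λ² < 1/2` the second moment `∑ n² aₙ λⁿ` is
positive, so `x f'(x)` vanishes at `λ` with positive derivative: `f` decreases to `0` before `λ`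
and increases after it. Subtracting `xᵖ` for a large `p` with `aₚ ≠ -1` keeps the coefficients in
`{-1, 0, 1}`, makes the value at `λ` negative and barely moves two positive values on either side
of `λ`, so the new series has a zero on each side of `λ`.
-/

open Set Filter Topology

noncomputable section

/-- The function on `(-1,1)` defined by the power series with coefficient sequence `a`. -/
def seriesFun (a : ℕ → ℝ) (x : ℝ) : ℝ := ∑' n, a n * x ^ n

/-- `a` is the coefficient sequence of a power series in the class `ℬ`:
constant term `1` and all other coefficients in `{-1, 0, 1}`. -/
def memB (a : ℕ → ℝ) : Prop :=
  a 0 = 1 ∧ ∀ n, 1 ≤ n → a n = -1 ∨ a n = 0 ∨ a n = 1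

/-- `a` is the coefficient sequence of a power series in the class `ℬ_{[-1,1]}`:
constant term `1` and all other coefficients in `[-1, 1]`. -/
def memBI (a : ℕ → ℝ) : Prop :=
  a 0 = 1 ∧ ∀ n, 1 ≤ n → a n ∈ Set.Icc (-1 : ℝ) 1

/-- `F` has at least `k` zeros in `(0, t]`, counted with multiplicity
(multiplicity = order of vanishing). -/
def hasZeros (F : ℝ → ℝ) (k : ℕ) (t : ℝ) : Prop :=
  ∃ (s : Finset ℝ) (d : ℝ → ℕ),
    (∀ x ∈ s, x ∈ Set.Ioc (0 : ℝ) t ∧ 1 ≤ d x ∧ ∀ j < d x, iteratedDeriv j F x = 0) ∧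
    k ≤ ∑ x ∈ s, d x

/-- `ξ_k(F)`: the `k`-th zero of `F` in `(0,1)` counted with multiplicity,
with the convention `ξ_k(F) = 1` if there are fewer than `k` such zeros. -/
def xi (k : ℕ) (F : ℝ → ℝ) : ℝ :=
  sInf (insert 1 {t | t ∈ Set.Ioo (0 : ℝ) 1 ∧ hasZeros F k t})

/-- `α₂`: the smallest double zero in `(0,1)` of a power series in `ℬ_{[-1,1]}`. -/
def alpha2 : ℝ :=
  sInf {x | x ∈ Set.Ioo (0 : ℝ) 1 ∧
    ∃ a, memBI a ∧ seriesFun a x = 0 ∧ deriv (seriesFun a) x = 0}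

/-- `α₃`: the smallest triple zero in `(0,1)` of a power series in `ℬ_{[-1,1]}`. -/
def alpha3 : ℝ :=
  sInf {x | x ∈ Set.Ioo (0 : ℝ) 1 ∧
    ∃ a, memBI a ∧ seriesFun a x = 0 ∧ deriv (seriesFun a) x = 0 ∧
      iteratedDeriv 2 (seriesFun a) x = 0}

/-- The set of values `ξ₂(f)` over `f ∈ ℬ_{[-1,1]}` with `f(γ) = 0`. -/
def phiSet (γ : ℝ) : Set ℝ :=
  {y | ∃ a, memBI a ∧ seriesFun a γ = 0 ∧ y = xi 2 (seriesFun a)}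

/-- `φ(γ) = min { ξ₂(f) : f ∈ ℬ_{[-1,1]}, f(γ) = 0 }`. -/
def phi (γ : ℝ) : ℝ := sInf (phiSet γ)

/-- The set of values `ξ₃(f)` over `f ∈ ℬ_{[-1,1]}` with `f(γ) = 0`. -/
def psiSet (γ : ℝ) : Set ℝ :=
  {y | ∃ a, memBI a ∧ seriesFun a γ = 0 ∧ y = xi 3 (seriesFun a)}

/-- `ψ(γ) = min { ξ₃(f) : f ∈ ℬ_{[-1,1]}, f(γ) = 0 }`. -/
def psi (γ : ℝ) : ℝ := sInf (psiSet γ)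

/-- The `(*)`-function `h_k^{(a)}(x) = 1 - x - ⋯ - x^(k-1) + a x^k + x^(k+1)/(1-x)`. -/
def hstar (k : ℕ) (a : ℝ) (x : ℝ) : ℝ :=
  1 - ∑ i ∈ Finset.Ico 1 k, x ^ i + a * x ^ k + x ^ (k + 1) / (1 - x)

/-- The `(**)`-function
`H_{k,ℓ}^{(a,b)}(x) = 1 - ∑_{i=1}^{k-1} x^i + a x^k + ∑_{i=k+1}^{ℓ-1} x^i + b x^ℓ - x^(ℓ+1)/(1-x)`. -/
def Hstar (k l : ℕ) (a b : ℝ) (x : ℝ) : ℝ :=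
  1 - ∑ i ∈ Finset.Ico 1 k, x ^ i + a * x ^ k + ∑ i ∈ Finset.Ico (k + 1) l, x ^ i +
    b * x ^ l - x ^ (l + 1) / (1 - x)

/-- The set `𝒩₊`. -/
def Nplus : Set (ℝ × ℝ) :=
  {p | 0 < p.1 ∧ p.1 < p.2 ∧ p.2 < 1 ∧
    ∃ a, memB a ∧ seriesFun a p.1 = 0 ∧ seriesFun a p.2 = 0}

/-- The set `𝒩̃₊`. -/
def NtildePlus : Set (ℝ × ℝ) :=
  {p | p ∈ Nplus ∧ ∃ a, memB a ∧ seriesFun a p.1 = 0 ∧ seriesFun a p.2 = 0 ∧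
    hasZeros (seriesFun a) 3 p.2}

/-- The "trivial" part `𝒩_t` of the connectedness locus. -/
def Nt : Set (ℝ × ℝ) :=
  {p | p.1 ∈ Set.Ioo (-1 : ℝ) 1 ∧ p.2 ∈ Set.Ioo (-1 : ℝ) 1 ∧ 1 / 2 ≤ |p.1 * p.2|}

/-- The region `Δ`. -/
def Delta : Set (ℝ × ℝ) :=
  {p | p.1 ∈ Set.Ioo (0 : ℝ) 1 ∧ p.2 ∈ Set.Ioo (0 : ℝ) 1 ∧ p.1 < p.2 ∧ p.1 * p.2 < 1 / 2}

open Asymptotics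

def eulerCoeff (c : ℕ → ℝ) (n : ℕ) : ℝ := n * c n

section PowerSeries

variable {c : ℕ → ℝ} {k : ℕ}

theorem isBigO_eulerCoeff (hc : c =O[atTop] fun n => (n : ℝ) ^ k) :
    eulerCoeff c =O[atTop] fun n => (n : ℝ) ^ (k + 1) := by
  simp only [pow_succ']
  exact (isBigO_refl (fun n : ℕ => (n : ℝ)) atTop).mul hc

theorem summable_norm_mul_pow (hc : c =O[atTop] fun n => (n : ℝ) ^ k) {x : ℝ} (hx : |x| < 1) :
    Summable fun n => ‖c n * x ^ n‖ :=
  summable_of_isBigO_nat (summable_pow_mul_geometric_of_norm_lt_one k hx)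
    (hc.mul (isBigO_refl (fun n => x ^ n) atTop)).norm_left

theorem summable_mul_pow (hc : c =O[atTop] fun n => (n : ℝ) ^ k) {x : ℝ} (hx : |x| < 1) :
    Summable fun n => c n * x ^ n :=
  (summable_norm_mul_pow hc hx).of_norm

theorem hasDerivAt_seriesFun (hc : c =O[atTop] fun n => (n : ℝ) ^ k) {x : ℝ} (hx : |x| < 1) :
    HasDerivAt (seriesFun c) (seriesFun (fun n => (n + 1) * c (n + 1)) x) x := by
  set r := (|x| + 1) / 2 with hr
  have hr0 : 0 < r := by positivity
  have hr1 : |r| < 1 := by rw [abs_of_pos hr0]; linarith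
  have hxr : x ∈ Ioo (-r) r := abs_lt.1 (by linarith)
  have hu : Summable fun n => |(n + 1) * c (n + 1)| * r ^ n := by
    have hshift := (summable_nat_add_iff 1).2 (summable_norm_mul_pow (isBigO_eulerCoeff hc) hr1)
    refine (hshift.mul_left r⁻¹).congr fun n => ?_
    simp only [eulerCoeff, Real.norm_eq_abs, abs_mul, abs_pow, abs_of_pos hr0, Nat.cast_succ]
    field_simp
    ring
  have htail := hasDerivAt_tsum_of_isPreconnected hu isOpen_Ioo isPreconnected_Ioo
    (g := fun n y => c (n + 1) * y ^ (n + 1)) (g' := fun n y => (n + 1) * c (n + 1) * y ^ n)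
    (fun n y _ => by
      simpa [mul_comm, mul_left_comm, mul_assoc] using
        (hasDerivAt_pow (n + 1) y).const_mul (c (n + 1)))
    (fun n y hy => by
      rw [Real.norm_eq_abs, abs_mul, abs_pow]
      gcongr
      exact (abs_lt.2 hy).le)
    (show (0 : ℝ) ∈ Ioo (-r) r by constructor <;> linarith) (by simp) hxr
  have hball : ∀ᶠ y in 𝓝 x, c 0 + ∑' n, c (n + 1) * y ^ (n + 1) = seriesFun c y := by
    filter_upwards [isOpen_Ioo.mem_nhds (abs_lt.1 hx)] with y hy
    rw [seriesFun, (summable_mul_pow hc (abs_lt.2 hy)).tsum_eq_zero_add, pow_zero, mul_one]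
  exact (htail.const_add (c 0)).congr_of_eventuallyEq (hball.mono fun y hy => hy.symm)

theorem continuousOn_seriesFun (hc : c =O[atTop] fun n => (n : ℝ) ^ k) :
    ContinuousOn (seriesFun c) (Ioo (-1) 1) := fun _ hx =>
  (hasDerivAt_seriesFun hc (abs_lt.2 hx)).continuousAt.continuousWithinAt

theorem seriesFun_eulerCoeff (hc : c =O[atTop] fun n => (n : ℝ) ^ k) {x : ℝ} (hx : |x| < 1) :
    seriesFun (eulerCoeff c) x = x * deriv (seriesFun c) x := by
  rw [(hasDerivAt_seriesFun hc hx).deriv, seriesFun, seriesFun,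
    (summable_mul_pow (isBigO_eulerCoeff hc) hx).tsum_eq_zero_add, ← tsum_mul_left]
  simp only [eulerCoeff, Nat.cast_zero, zero_mul, zero_add, Nat.cast_succ]
  exact tsum_congr fun n => by ring

end PowerSeries

theorem eventually_nhdsNE_lt_of_sign_deriv {f : ℝ → ℝ} {x₀ : ℝ} (hc : ContinuousAt f x₀)
    (hf : ∀ᶠ x in 𝓝 x₀, SignType.sign (deriv f x) = SignType.sign (x - x₀)) :
    ∀ᶠ x in 𝓝[≠] x₀, f x₀ < f x := by
  obtain ⟨ρ, hρ, hsign⟩ := Metric.eventually_nhds_iff_ball.1 hf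
  have hcont : ContinuousOn f (Metric.ball x₀ ρ) := fun y hy => by
    rcases eq_or_ne y x₀ with rfl | hne
    · exact hc.continuousWithinAt
    · refine (differentiableAt_of_deriv_ne_zero fun h => hne ?_).continuousAt.continuousWithinAt
      have := hsign y hy
      rwa [h, sign_zero, eq_comm, sign_eq_zero_iff, sub_eq_zero] at this
  have hIcc : ∀ {a b}, a ∈ Metric.ball x₀ ρ → b ∈ Metric.ball x₀ ρ → Icc a b ⊆ Metric.ball x₀ ρ :=
    fun ha hb => (convex_ball x₀ ρ).ordConnected.out ha hb
  filter_upwards [nhdsWithin_le_nhds (Metric.ball_mem_nhds x₀ hρ), self_mem_nhdsWithin]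
    with x hx hne
  have hx₀ := Metric.mem_ball_self (x := x₀) hρ
  rcases (Ne.lt_or_gt hne) with hlt | hgt
  · refine strictAntiOn_of_deriv_neg (convex_Icc x x₀) (hcont.mono (hIcc hx hx₀)) (fun y hy => ?_)
      ⟨le_rfl, hlt.le⟩ ⟨hlt.le, le_rfl⟩ hlt
    rw [interior_Icc] at hy
    rw [← sign_eq_neg_one_iff, hsign y (hIcc hx hx₀ (Ioo_subset_Icc_self hy)),
      sign_eq_neg_one_iff, sub_neg]
    exact hy.2
  · refine strictMonoOn_of_deriv_pos (convex_Icc x₀ x) (hcont.mono (hIcc hx₀ hx)) (fun y hy => ?_)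
      ⟨le_rfl, hgt.le⟩ ⟨hgt.le, le_rfl⟩ hgt
    rw [interior_Icc] at hy
    rw [← sign_eq_one_iff, hsign y (hIcc hx₀ hx (Ioo_subset_Icc_self hy)), sign_eq_one_iff, sub_pos]
    exact hy.1

theorem hasSum_sq_mul_geometric {r : ℝ} (hr : |r| < 1) :
    HasSum (fun n : ℕ => (n : ℝ) ^ 2 * r ^ n) (r * (1 + r) / (1 - r) ^ 3) := by
  have h1 : 1 - r ≠ 0 := by linarith [(abs_lt.1 hr).2]
  have hterm : (fun n : ℕ => (n : ℝ) ^ 2 * r ^ n) = fun n =>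
      2 * (((n + 2 : ℕ).choose 2 : ℕ) * r ^ n) - (3 * (n * r ^ n) + 2 * r ^ n) := by
    ext n
    rw [Nat.cast_choose_two]
    push_cast
    ring
  have hsum : r * (1 + r) / (1 - r) ^ 3 =
      2 * (1 / (1 - r) ^ (2 + 1)) - (3 * (r / (1 - r) ^ 2) + 2 * (1 - r)⁻¹) := by
    field_simp
    ring
  have hr' : ‖r‖ < 1 := hr
  rw [hterm, hsum]
  exact ((hasSum_choose_mul_geometric_of_norm_lt_one 2 hr').mul_left 2).sub
    (((hasSum_coe_mul_geometric_of_norm_lt_one hr').mul_left 3).add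
      ((hasSum_geometric_of_abs_lt_one hr).mul_left 2))

theorem memB.memBI {a : ℕ → ℝ} (ha : memB a) : memBI a := by
  refine ⟨ha.1, fun n hn => ?_⟩
  rcases ha.2 n hn with h | h | h <;> rw [h] <;> norm_num

theorem memBI.abs_le_one {a : ℕ → ℝ} (ha : memBI a) (n : ℕ) : |a n| ≤ 1 := by
  rcases Nat.eq_zero_or_pos n with rfl | hn
  · rw [ha.1, abs_one]
  · exact abs_le.2 (ha.2 n hn)

theorem memBI.isBigO {a : ℕ → ℝ} (ha : memBI a) : a =O[atTop] fun n => (n : ℝ) ^ 0 :=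
  IsBigO.of_bound 1 (Eventually.of_forall fun n => by simpa using ha.abs_le_one n)

/-- With `u = (1 - t)/(1 + t)`, the hypotheses reduce `∑ (1 - n u)² aₙ tⁿ` to `u² ∑ n² aₙ tⁿ`,
and `∑ (1 - n u)² tⁿ = 1/(1 - t²)` is `< 2` exactly when `t² < 1/2`; the sum of the two series
has nonnegative terms and constant term `2`. -/
theorem seriesFun_eulerCoeff_eulerCoeff_pos {a : ℕ → ℝ} (ha : memBI a) {t : ℝ} (ht0 : 0 < t)
    (ht : t ^ 2 < 1 / 2) (h0 : seriesFun a t = 0) (h1 : seriesFun (eulerCoeff a) t = 0) :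
    0 < seriesFun (eulerCoeff (eulerCoeff a)) t := by
  have ht1 : |t| < 1 := by rw [abs_of_pos ht0]; nlinarith
  have ht1' : ‖t‖ < 1 := ht1
  have hO := ha.isBigO
  set u := (1 - t) / (1 + t)
  have hgeom : HasSum (fun n : ℕ => (1 - n * u) ^ 2 * t ^ n) (1 / (1 - t ^ 2)) := by
    have h := ((hasSum_geometric_of_abs_lt_one ht1).sub
      ((hasSum_coe_mul_geometric_of_norm_lt_one ht1').mul_left (2 * u))).add
      ((hasSum_sq_mul_geometric ht1).mul_left (u ^ 2))
    have hval : (1 - t)⁻¹ - 2 * u * (t / (1 - t) ^ 2) + u ^ 2 * (t * (1 + t) / (1 - t) ^ 3) =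
        1 / (1 - t ^ 2) := by
      have : 1 - t ≠ 0 := by linarith [(abs_lt.1 ht1).2]
      have : 1 + t ≠ 0 := by linarith
      have : 1 - t ^ 2 ≠ 0 := by linarith
      simp only [u]
      field_simp
      ring
    rw [hval] at h
    exact h.congr_fun fun n => by ring
  have hmoments : HasSum (fun n : ℕ => (1 - n * u) ^ 2 * (a n * t ^ n))
      (u ^ 2 * seriesFun (eulerCoeff (eulerCoeff a)) t) := by
    have h := (((summable_mul_pow hO ht1).hasSum).sub
      ((summable_mul_pow (isBigO_eulerCoeff hO) ht1).hasSum.mul_left (2 * u))).add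
      ((summable_mul_pow (isBigO_eulerCoeff (isBigO_eulerCoeff hO)) ht1).hasSum.mul_left (u ^ 2))
    change HasSum _ (seriesFun a t - 2 * u * seriesFun (eulerCoeff a) t +
      u ^ 2 * seriesFun (eulerCoeff (eulerCoeff a)) t) at h
    rw [h0, h1, mul_zero, sub_zero, zero_add] at h
    exact h.congr_fun fun n => by simp only [eulerCoeff]; ring
  have hle := le_hasSum (hmoments.add hgeom) 0 fun n _ => by
    rw [← mul_add, ← add_one_mul]
    have := (abs_le.1 (ha.abs_le_one n)).1
    exact mul_nonneg (sq_nonneg _) (mul_nonneg (by linarith) (pow_nonneg ht0.le n))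
  have hlt : 1 / (1 - t ^ 2) < 2 := by
    rw [div_lt_iff₀ (by linarith)]
    linarith
  simp only [Nat.cast_zero, zero_mul, sub_zero, one_pow, pow_zero, ha.1, mul_one] at hle
  by_contra! hneg
  nlinarith [mul_nonpos_of_nonneg_of_nonpos (sq_nonneg u) hneg]

theorem seriesFun_sub_single {c : ℕ → ℝ} {x : ℝ} (hc : Summable fun n => c n * x ^ n) (p : ℕ) :
    seriesFun (c - Pi.single p 1) x = seriesFun c x - x ^ p := by
  have hp : HasSum (fun n => (Pi.single p 1 : ℕ → ℝ) n * x ^ n) (x ^ p) := by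
    simpa using hasSum_single (f := fun n => (Pi.single p 1 : ℕ → ℝ) n * x ^ n) p
      fun n hn => by simp [Pi.single_eq_of_ne hn]
  exact ((hc.hasSum.sub hp).congr_fun fun n => sub_mul _ _ _).tsum_eq

theorem memB.sub_single {a : ℕ → ℝ} (ha : memB a) {p : ℕ} (hp : 1 ≤ p) (hap : a p ≠ -1) :
    memB (a - Pi.single p 1) := by
  refine ⟨by simp [ha.1, Pi.single_eq_of_ne (show 0 ≠ p by omega)], fun n hn => ?_⟩
  rcases eq_or_ne n p with rfl | hne
  · rcases ha.2 n hn with h | h | h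
    · exact absurd h hap
    · left; simp [h]
    · right; left; simp [h]
  · simpa [Pi.single_apply, hne] using ha.2 n hn

theorem exists_memB_zeros_of_pos_of_nonpos {a : ℕ → ℝ} (ha : memB a)
    (hinf : {n : ℕ | a n ≠ -1}.Infinite) {x₁ t x₂ : ℝ} (hx₁ : 0 < x₁) (h₁ : x₁ < t) (h₂ : t < x₂)
    (hx₂ : x₂ < 1) (hf₁ : 0 < seriesFun a x₁) (hft : seriesFun a t ≤ 0)
    (hf₂ : 0 < seriesFun a x₂) :
    ∃ g, memB g ∧ ∃ γ ∈ Ioo x₁ t, ∃ μ ∈ Ioo t x₂, seriesFun g γ = 0 ∧ seriesFun g μ = 0 := by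
  have hO := ha.memBI.isBigO
  obtain ⟨N, hN⟩ := exists_pow_lt_of_lt_one (lt_min hf₁ hf₂) hx₂
  obtain ⟨p, hap, hpN⟩ := hinf.exists_gt N
  have hp : x₂ ^ p < min (seriesFun a x₁) (seriesFun a x₂) :=
    (pow_le_pow_of_le_one (by linarith) hx₂.le hpN.le).trans_lt hN
  have hIcc : Icc x₁ x₂ ⊆ Ioo (-1) 1 := Icc_subset_Ioo (by linarith) hx₂
  have hg : ∀ x ∈ Icc x₁ x₂, seriesFun (a - Pi.single p 1) x = seriesFun a x - x ^ p :=
    fun x hx => seriesFun_sub_single (summable_mul_pow hO (abs_lt.2 (hIcc hx))) p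
  have hcont : ContinuousOn (fun x => seriesFun a x - x ^ p) (Icc x₁ x₂) :=
    ((continuousOn_seriesFun hO).mono hIcc).sub (continuous_pow p).continuousOn
  have hneg : seriesFun a t - t ^ p < 0 := by linarith [pow_pos (hx₁.trans h₁) p]
  have hpos₁ : 0 < seriesFun a x₁ - x₁ ^ p := by
    have := pow_le_pow_left₀ hx₁.le (h₁.trans h₂).le p
    linarith [min_le_left (seriesFun a x₁) (seriesFun a x₂)]
  have hpos₂ : 0 < seriesFun a x₂ - x₂ ^ p := by
    linarith [min_le_right (seriesFun a x₁) (seriesFun a x₂)]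
  obtain ⟨γ, hγ, hγ0⟩ := intermediate_value_Ioo' h₁.le
    (hcont.mono (Icc_subset_Icc_right h₂.le)) ⟨hneg, hpos₁⟩
  obtain ⟨μ, hμ, hμ0⟩ := intermediate_value_Ioo h₂.le
    (hcont.mono (Icc_subset_Icc_left h₁.le)) ⟨hneg, hpos₂⟩
  refine ⟨_, ha.sub_single (by omega) hap, γ, hγ, μ, hμ, ?_, ?_⟩
  · rw [hg γ (Ioo_subset_Icc_self ⟨hγ.1, hγ.2.trans h₂⟩)]
    exact hγ0
  · rw [hg μ (Ioo_subset_Icc_self ⟨h₁.trans hμ.1, hμ.2⟩)]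
    exact hμ0

/-- If `λ ∈ (0, 2^{-1/2})` is a double zero of some `f ∈ ℬ` having
infinitely many coefficients different from `-1`, then `(λ, λ)` is in the closure of
`𝒩₊`. -/
theorem stmt19 (lam : ℝ) (hlam0 : 0 < lam) (hlam1 : lam < (2 : ℝ) ^ (-(1 / 2) : ℝ))
    (a : ℕ → ℝ) (ha : memB a) (h0 : seriesFun a lam = 0) (h1 : deriv (seriesFun a) lam = 0)
    (hinf : {n : ℕ | a n ≠ -1}.Infinite) :
    ∀ ε > (0 : ℝ), ∃ (g : ℕ → ℝ) (γ' lam' : ℝ), memB g ∧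
      lam - ε < γ' ∧ γ' < lam' ∧ lam' < lam + ε ∧ 0 < γ' ∧ lam' < 1 ∧
      seriesFun g γ' = 0 ∧ seriesFun g lam' = 0 := by
  intro ε hε
  have hO := ha.memBI.isBigO
  have hlam_sq : lam ^ 2 < 1 / 2 :=
    calc lam ^ 2 < ((2 : ℝ) ^ (-(1 / 2) : ℝ)) ^ 2 := by gcongr
      _ = 1 / 2 := by rw [← Real.rpow_natCast, ← Real.rpow_mul (by norm_num)]; norm_num
  have hlam_mem : lam ∈ Ioo 0 1 := ⟨hlam0, by nlinarith⟩
  have hΘ0 : seriesFun (eulerCoeff a) lam = 0 := by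
    rw [seriesFun_eulerCoeff hO (abs_lt.2 ⟨by linarith, hlam_mem.2⟩), h1, mul_zero]
  have hΘ' : 0 < deriv (seriesFun (eulerCoeff a)) lam := by
    have := seriesFun_eulerCoeff_eulerCoeff_pos ha.memBI hlam0 hlam_sq h0 hΘ0
    rw [seriesFun_eulerCoeff (isBigO_eulerCoeff hO) (abs_lt.2 ⟨by linarith, hlam_mem.2⟩)] at this
    exact pos_of_mul_pos_right this hlam0.le
  have hsign : ∀ᶠ x in 𝓝 lam, SignType.sign (deriv (seriesFun a) x) = SignType.sign (x - lam) := by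
    filter_upwards [eventually_nhdsWithin_sign_eq_of_deriv_pos hΘ' hΘ0,
      isOpen_Ioo.mem_nhds hlam_mem] with x hx hx01
    rw [← hx, seriesFun_eulerCoeff hO (abs_lt.2 ⟨by linarith [hx01.1], hx01.2⟩), sign_mul,
      sign_pos hx01.1, one_mul]
  have hpos : ∀ᶠ x in 𝓝[≠] lam, 0 < seriesFun a x := by
    simpa only [h0] using eventually_nhdsNE_lt_of_sign_deriv
      ((continuousOn_seriesFun hO).continuousAt (Ioo_mem_nhds (by linarith) hlam_mem.2)) hsign
  obtain ⟨x₁, hf₁, hx₁⟩ := ((hpos.filter_mono (nhdsLT_le_nhdsNE lam)).and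
    (Ioo_mem_nhdsLT (max_lt (by linarith : lam - ε < lam) hlam0))).exists
  obtain ⟨x₂, hf₂, hx₂⟩ := ((hpos.filter_mono (nhdsGT_le_nhdsNE lam)).and
    (Ioo_mem_nhdsGT (lt_min (by linarith : lam < lam + ε) hlam_mem.2))).exists
  obtain ⟨g, hg, γ, hγ, μ, hμ, hgγ, hgμ⟩ := exists_memB_zeros_of_pos_of_nonpos ha hinf
    (lt_of_le_of_lt (le_max_right _ _) hx₁.1) hx₁.2 hx₂.1 (lt_of_lt_of_le hx₂.2 (min_le_right _ _))
    hf₁ h0.le hf₂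
  refine ⟨g, γ, μ, hg, ?_, hγ.2.trans hμ.1, ?_, ?_, ?_, hgγ, hgμ⟩
  · linarith [le_max_left (lam - ε) 0, hx₁.1, hγ.1]
  · linarith [min_le_left (lam + ε) 1, hx₂.2, hμ.2]
  · linarith [le_max_right (lam - ε) 0, hx₁.1, hγ.1]
  · linarith [min_le_right (lam + ε) 1, hx₂.2, hμ.2]
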